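/- Let Ω : ℝ^n → ℝ be homogeneous of degree zero and integrable on the unit sphere S^{n−1} with mean value zero on S^{n−1}. For t ∈ [1,2] and j ∈ ℤ set K_t^j(x) = 2^{-j} Ω(x) |x|^{-(n-1)} χ_{{2^{j-1} t < |x| ≤ 2^j t}}(x). Then there is a constant C depending only on n such that for all ξ ∈ ℝ^n \ {0}, all t ∈ [1,2] and all j ∈ ℤ, |K̂_t^j(ξ)| ≤ C ‖Ω‖_{L^1(S^{n-1})} · min{1, |2^j ξ|}. -/

import Mathlib

open MeasureTheory Metric Set ENNReal

noncomputable section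

variable {n : ℕ}

abbrev Euc (n : ℕ) := EuclideanSpace ℝ (Fin n)

/-- The surface measure on the unit sphere `S^{n-1}`. -/
def sphereMeasure (n : ℕ) : Measure (sphere (0 : Euc n) 1) :=
  (volume : Measure (Euc n)).toSphere

/-- `Ω` is homogeneous of degree zero. -/
def HomogZero (Ω : Euc n → ℝ) : Prop :=
  ∀ (r : ℝ), 0 < r → ∀ x : Euc n, Ω (r • x) = Ω x

/-- The `L^q` norm of `Ω` on the unit sphere, as an element of `ℝ≥0∞`. -/
def sphereNorm (q : ℝ≥0∞) (Ω : Euc n → ℝ) : ℝ≥0∞ :=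
  eLpNorm (fun x : sphere (0 : Euc n) 1 => Ω x) q (sphereMeasure n)

/-- Mean value zero on the sphere. -/
def MeanZero (Ω : Euc n → ℝ) : Prop :=
  ∫ x : sphere (0 : Euc n) 1, Ω x ∂(sphereMeasure n) = 0

/-- The kernel `K_t^j`. -/
def Kk (n : ℕ) (Ω : Euc n → ℝ) (j : ℤ) (t : ℝ) (x : Euc n) : ℝ :=
  if (2 : ℝ) ^ (j - 1) * t < ‖x‖ ∧ ‖x‖ ≤ (2 : ℝ) ^ j * t then
    (2 : ℝ) ^ (-j) * Ω x / ‖x‖ ^ (n - 1) else 0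

/-- mollifier dilation `φ_l(y) = 2^{-nl} φ(2^{-l} y)`. -/
def moll (n : ℕ) (φ : Euc n → ℝ) (l : ℤ) (y : Euc n) : ℝ :=
  (2 : ℝ) ^ (-(n : ℤ) * l) * φ ((2 : ℝ) ^ (-l) • y)

/-- convolution of two scalar functions. -/
def conv (f g : Euc n → ℝ) (x : Euc n) : ℝ := ∫ y, f (x - y) * g y

/-- The (smoothed) Marcinkiewicz square function built from a kernel family
`j ↦ t ↦ kernel`. -/
def sqFun (K : ℤ → ℝ → Euc n → ℝ) (f : Euc n → ℝ) (x : Euc n) : ℝ :=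
  Real.sqrt (∫ t in (1:ℝ)..2, ∑' j : ℤ, (conv (K j t) f x) ^ 2)

/-- `M̃_Ω`. -/
def MarTilde (n : ℕ) (Ω : Euc n → ℝ) (f : Euc n → ℝ) : Euc n → ℝ :=
  sqFun (fun j t => Kk n Ω j t) f

/-- `M̃_Ω^l`, the smoothed Marcinkiewicz operator. -/
def MarTildeL (n : ℕ) (Ω φ : Euc n → ℝ) (l : ℕ) (f : Euc n → ℝ) : Euc n → ℝ :=
  sqFun (fun j t => conv (Kk n Ω j t) (moll n φ (j - l))) f

/-- The Marcinkiewicz integral `M_Ω`. -/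
def Mar (n : ℕ) (Ω : Euc n → ℝ) (f : Euc n → ℝ) (x : Euc n) : ℝ :=
  Real.sqrt (∫ t in Ioi (0:ℝ),
    (∫ y in {y : Euc n | ‖x - y‖ ≤ t}, Ω (x - y) / ‖x - y‖ ^ (n - 1) * f y) ^ 2 / t ^ 3)

/-- Axis-parallel cubes in `ℝ^n`. -/
structure Cube (n : ℕ) where
  c : Euc n
  h : ℝ
  pos : 0 < h

def Cube.set (Q : Cube n) : Set (Euc n) := {x | ∀ i, Q.c i ≤ x i ∧ x i < Q.c i + Q.h}

/-- average of an `ℝ≥0∞`-valued function over a cube. -/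
def cubeAvg (Q : Cube n) (g : Euc n → ℝ≥0∞) : ℝ≥0∞ :=
  (volume Q.set)⁻¹ * ∫⁻ x in Q.set, g x

/-- average of a real function over a cube. -/
def cubeAvgR (Q : Cube n) (f : Euc n → ℝ) : ℝ :=
  (volume Q.set).toReal⁻¹ * ∫ x in Q.set, f x

/-- The Muckenhoupt `A_p` constant (over cubes). -/
def ApConst (n : ℕ) (p : ℝ) (w : Euc n → ℝ) : ℝ≥0∞ :=
  ⨆ Q : Cube n, cubeAvg Q (fun x => ENNReal.ofReal (w x)) *
    (cubeAvg Q (fun x => ENNReal.ofReal (w x ^ (-(1:ℝ)/(p-1))))) ^ (p - 1)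

/-- Hardy–Littlewood type maximal operator over cubes, `ℝ≥0∞`-valued. -/
def cubeMaximal (g : Euc n → ℝ≥0∞) (x : Euc n) : ℝ≥0∞ :=
  ⨆ (Q : Cube n) (_ : x ∈ Q.set), cubeAvg Q g

/-- The Fujii–Wilson `A_∞` constant. -/
def AinftyConst (n : ℕ) (w : Euc n → ℝ) : ℝ≥0∞ :=
  ⨆ Q : Cube n,
    (∫⁻ x in Q.set, cubeMaximal (Q.set.indicator fun y => ENNReal.ofReal (w y)) x) /
      ∫⁻ x in Q.set, ENNReal.ofReal (w x)

/-- weighted measure `w dx`. -/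
def wMeasure (n : ℕ) (w : Euc n → ℝ) : Measure (Euc n) :=
  volume.withDensity (fun x => ENNReal.ofReal (w x))

/-- an `η`-sparse family of cubes. -/
def IsSparse (η : ℝ) (S : Set (Cube n)) : Prop :=
  S.Countable ∧ ∃ E : Cube n → Set (Euc n),
    (∀ Q ∈ S, E Q ⊆ Q.set ∧ ENNReal.ofReal η * volume Q.set ≤ volume (E Q)) ∧
    S.Pairwise fun Q Q' => Disjoint (E Q) (E Q')

/-- `{w}_{A_σ, r}` from the paper. -/
def braceConst (n : ℕ) (σ r : ℝ) (w : Euc n → ℝ) : ℝ≥0∞ :=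
  ApConst n σ w ^ (1/r) *
    max ((AinftyConst n w) ^ (1 - 1/r))
      ((AinftyConst n (fun x => w x ^ (1 - σ/(σ-1)))) ^ (1/r))

end

/-! Write `K_t^j(x) = Ω(x) ρ(|x|)` with `ρ(r) = 2^{-j} r^{1-n}` on `(2^{j-1}t, 2^j t]`. In polar
coordinates the factor `r^{1-n}` cancels the Jacobian, so `‖K_t^j‖₁ = ‖Ω‖_{L¹(S^{n-1})} t / 2`, and
`∫ K_t^j = 0` by the mean-zero condition. The first fact bounds `|K̂_t^j(ξ)|` by `‖K_t^j‖₁`. The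
second lets one replace the character `e(-⟨x, ξ⟩)` by `e(-⟨x, ξ⟩) - 1`, which is at most
`2π |x| |ξ| ≤ 2π 2^j t |ξ|` on the support of `K_t^j`. -/

section Polar

variable {E : Type*} [NormedAddCommGroup E] [NormedSpace ℝ E]
  {Ω : E → ℝ} (hΩ : ∀ r : ℝ, 0 < r → ∀ x, Ω (r • x) = Ω x) (g : ℝ → ℝ)
include hΩ

theorem mul_norm_comp_homeomorphUnitSphereProd (x : ({0}ᶜ : Set E)) :
    Ω (homeomorphUnitSphereProd E x).1 * g (homeomorphUnitSphereProd E x).2 =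
      Ω x * g ‖(x : E)‖ := by
  rw [homeomorphUnitSphereProd_apply_fst_coe, homeomorphUnitSphereProd_apply_snd_coe,
    hΩ _ (inv_pos.2 (norm_pos_iff.2 x.2))]

variable [MeasurableSpace E] [BorelSpace E] [FiniteDimensional ℝ E] [Nontrivial E]
  (μ : Measure E) [μ.IsAddHaarMeasure]

theorem integral_mul_norm_of_homogeneous :
    ∫ x, Ω x * g ‖x‖ ∂μ = (∫ θ, Ω θ ∂μ.toSphere) *
      ∫ r : Ioi (0 : ℝ), g r ∂Measure.volumeIoiPow (Module.finrank ℝ E - 1) := by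
  calc ∫ x, Ω x * g ‖x‖ ∂μ = ∫ x : ({0}ᶜ : Set E), Ω x * g ‖(x : E)‖ ∂μ.comap (↑) := by
        rw [integral_subtype_comap (measurableSet_singleton _).compl fun x => Ω x * g ‖x‖,
          restrict_compl_singleton]
    _ = ∫ p, Ω p.1 * g p.2 ∂μ.toSphere.prod (.volumeIoiPow (Module.finrank ℝ E - 1)) := by
        simp_rw [← mul_norm_comp_homeomorphUnitSphereProd hΩ g]
        exact μ.measurePreserving_homeomorphUnitSphereProd.integral_comp
          (Homeomorph.measurableEmbedding _) (fun p => Ω p.1 * g p.2)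
    _ = _ := integral_prod_mul (fun θ : sphere (0 : E) 1 => Ω θ) (fun r : Ioi (0 : ℝ) => g r)

theorem integrable_mul_norm_of_homogeneous
    (hΩi : Integrable (fun θ : sphere (0 : E) 1 => Ω θ) μ.toSphere)
    (hg : Integrable (fun r : Ioi (0 : ℝ) => g r) (.volumeIoiPow (Module.finrank ℝ E - 1))) :
    Integrable (fun x => Ω x * g ‖x‖) μ := by
  rw [← restrict_compl_singleton (μ := μ) 0, ← IntegrableOn,
    integrableOn_iff_comap_subtypeVal (measurableSet_singleton _).compl]
  have := (μ.measurePreserving_homeomorphUnitSphereProd.integrable_comp_emb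
    (Homeomorph.measurableEmbedding _)).2 (hΩi.mul_prod hg)
  simpa only [Function.comp_def, mul_norm_comp_homeomorphUnitSphereProd hΩ g] using this

end Polar

namespace MeasureTheory.Measure

variable (m : ℕ) (g : ℝ → ℝ)

theorem integral_volumeIoiPow :
    ∫ r : Ioi (0 : ℝ), g r ∂volumeIoiPow m = ∫ r in Ioi (0 : ℝ), r ^ m * g r := by
  simp only [volumeIoiPow, ENNReal.ofReal]
  rw [integral_withDensity_eq_integral_smul ((measurable_subtype_coe.pow_const _).real_toNNReal),
    integral_subtype_comap measurableSet_Ioi fun r => Real.toNNReal (r ^ m) • g r]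
  refine setIntegral_congr_fun measurableSet_Ioi fun r (hr : 0 < r) => ?_
  rw [NNReal.smul_def, Real.coe_toNNReal _ (pow_nonneg hr.le _), smul_eq_mul]

theorem integrable_volumeIoiPow_iff :
    Integrable (fun r : Ioi (0 : ℝ) => g r) (volumeIoiPow m) ↔
      IntegrableOn (fun r => r ^ m * g r) (Ioi 0) := by
  rw [volumeIoiPow, integrable_withDensity_iff_integrable_smul' (by fun_prop) (by simp),
    integrableOn_iff_comap_subtypeVal measurableSet_Ioi]
  refine integrable_congr (.of_forall fun r => ?_)
  simp [ENNReal.toReal_ofReal (pow_nonneg r.2.out.le _)]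

end MeasureTheory.Measure

noncomputable def annulusProfile (m : ℕ) (a b c r : ℝ) : ℝ :=
  if a < r ∧ r ≤ b then c / r ^ m else 0

section annulusProfile

variable {m : ℕ} {a b c : ℝ}

theorem annulusProfile_nonneg {r : ℝ} (hc : 0 ≤ c) (hr : 0 ≤ r) :
    0 ≤ annulusProfile m a b c r := by
  unfold annulusProfile; split_ifs <;> positivity

theorem pow_mul_annulusProfile {r : ℝ} (hr : 0 < r) :
    r ^ m * annulusProfile m a b c r = (Ioc a b).indicator (fun _ => c) r := by
  unfold annulusProfile indicator
  simp only [mem_Ioc]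
  split_ifs
  · field_simp
  · rw [mul_zero]

theorem integrable_annulusProfile :
    Integrable (fun r : Ioi (0 : ℝ) => annulusProfile m a b c r) (.volumeIoiPow m) := by
  rw [Measure.integrable_volumeIoiPow_iff, IntegrableOn, integrable_congr
    ((ae_restrict_mem measurableSet_Ioi).mono fun r hr => pow_mul_annulusProfile hr)]
  exact ((integrable_indicator_iff measurableSet_Ioc).2
    (integrableOn_const measure_Ioc_lt_top.ne)).restrict

theorem integral_annulusProfile (ha : 0 ≤ a) (hab : a ≤ b) :
    ∫ r : Ioi (0 : ℝ), annulusProfile m a b c r ∂.volumeIoiPow m = c * (b - a) := by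
  rw [Measure.integral_volumeIoiPow,
    setIntegral_congr_fun measurableSet_Ioi fun r hr => pow_mul_annulusProfile hr,
    integral_indicator measurableSet_Ioc, Measure.restrict_restrict measurableSet_Ioc,
    inter_eq_self_of_subset_left (Ioc_subset_Ioi_self.trans (Ioi_subset_Ioi ha)),
    setIntegral_const, Real.volume_real_Ioc_of_le hab, smul_eq_mul, mul_comm]

end annulusProfile

section FourierCancellation

open Real FourierTransform
open scoped RealInnerProductSpace

theorem norm_fourierChar_sub_one_le (x : ℝ) : ‖(𝐞 x : ℂ) - 1‖ ≤ 2 * π * |x| := by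
  rw [Real.fourierChar_apply, mul_comm]
  simpa [abs_mul, abs_of_pos pi_pos] using Real.norm_exp_I_mul_ofReal_sub_one_le (x := 2 * π * x)

variable {V E : Type*} [NormedAddCommGroup V] [InnerProductSpace ℝ V] [MeasurableSpace V]
  [BorelSpace V] [NormedAddCommGroup E] [NormedSpace ℂ E] {μ : Measure V}

theorem norm_fourierIntegral_le_of_integral_eq_zero {f : V → E} (hf : Integrable f μ)
    (hf₀ : ∫ v, f v ∂μ = 0) {R : ℝ} (hR : ∀ v, f v ≠ 0 → ‖v‖ ≤ R) (w : V) :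
    ‖VectorFourier.fourierIntegral 𝐞 μ (innerₗ V) f w‖ ≤ 2 * π * R * ‖w‖ * ∫ v, ‖f v‖ ∂μ := by
  have hsub : VectorFourier.fourierIntegral 𝐞 μ (innerₗ V) f w =
      ∫ v, ((𝐞 (-⟪v, w⟫) : ℂ) - 1) • f v ∂μ := by
    simp_rw [sub_smul, one_smul, ← Circle.smul_def]
    rw [integral_sub ((Real.fourierIntegral_convergent_iff w).2 hf) hf, hf₀, sub_zero]
    rfl
  have hpt : ∀ v, ‖((𝐞 (-⟪v, w⟫) : ℂ) - 1) • f v‖ ≤ 2 * π * R * ‖w‖ * ‖f v‖ := by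
    intro v
    rcases eq_or_ne (f v) 0 with hv | hv
    · simp [hv]
    rw [norm_smul]
    gcongr
    calc ‖(𝐞 (-⟪v, w⟫) : ℂ) - 1‖ ≤ 2 * π * |⟪v, w⟫| := by
          simpa using norm_fourierChar_sub_one_le (-⟪v, w⟫)
      _ ≤ 2 * π * (R * ‖w‖) := by
          gcongr
          exact (abs_real_inner_le_norm v w).trans (by gcongr; exact hR v hv)
      _ = 2 * π * R * ‖w‖ := by ring
  rw [hsub, ← integral_const_mul]
  exact (norm_integral_le_integral_norm _).trans
    (integral_mono_of_nonneg (.of_forall fun _ => norm_nonneg _) (hf.norm.const_mul _)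
      (.of_forall hpt))

end FourierCancellation

section Kk

variable {n : ℕ} {Ω : Euc n → ℝ} {j : ℤ} {t : ℝ}

theorem Kk_eq_mul_annulusProfile (x : Euc n) :
    Kk n Ω j t x = Ω x * annulusProfile (n - 1) (2 ^ (j - 1) * t) (2 ^ j * t) (2 ^ (-j)) ‖x‖ := by
  unfold Kk annulusProfile
  split_ifs
  · ring
  · rw [mul_zero]

theorem norm_le_of_Kk_ne_zero {x : Euc n} (hx : Kk n Ω j t x ≠ 0) : ‖x‖ ≤ 2 ^ j * t := by
  unfold Kk at hx
  split_ifs at hx with h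
  · exact h.2
  · exact absurd rfl hx

theorem integral_annulusProfile_Kk (ht : 0 ≤ t) :
    ∫ r : Ioi (0 : ℝ), annulusProfile (n - 1) (2 ^ (j - 1) * t) (2 ^ j * t) (2 ^ (-j)) r
      ∂.volumeIoiPow (n - 1) = t / 2 := by
  rw [integral_annulusProfile (by positivity) (by gcongr; exacts [one_le_two, by omega]),
    zpow_sub₀ two_ne_zero, zpow_neg, zpow_one]
  field_simp
  ring

variable [Nontrivial (Euc n)]

theorem integrable_Kk (hom : HomogZero Ω)
    (hint : Integrable (fun x : sphere (0 : Euc n) 1 => Ω x) (sphereMeasure n)) :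
    Integrable (Kk n Ω j t) := by
  simp_rw [funext Kk_eq_mul_annulusProfile]
  refine integrable_mul_norm_of_homogeneous hom _ volume hint ?_
  rw [finrank_euclideanSpace_fin]
  exact integrable_annulusProfile

theorem integral_Kk_eq_zero (hom : HomogZero Ω) (hmean : MeanZero Ω) :
    ∫ x, Kk n Ω j t x = 0 := by
  simp_rw [Kk_eq_mul_annulusProfile]
  rw [integral_mul_norm_of_homogeneous hom _ volume]
  exact mul_eq_zero_of_left hmean _

theorem integral_norm_Kk (hom : HomogZero Ω) (ht : 0 ≤ t) :
    ∫ x, ‖Kk n Ω j t x‖ = (∫ θ, |Ω θ| ∂sphereMeasure n) * (t / 2) := by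
  have hprofile (x : Euc n) : ‖Kk n Ω j t x‖ =
      |Ω x| * annulusProfile (n - 1) (2 ^ (j - 1) * t) (2 ^ j * t) (2 ^ (-j)) ‖x‖ := by
    rw [Kk_eq_mul_annulusProfile, norm_mul, Real.norm_eq_abs, Real.norm_of_nonneg
      (annulusProfile_nonneg (by positivity) (norm_nonneg x))]
  simp_rw [hprofile]
  rw [integral_mul_norm_of_homogeneous (fun r hr x => by rw [hom r hr x]) _ volume,
    finrank_euclideanSpace_fin, integral_annulusProfile_Kk ht]
  rfl

end Kk

theorem sphereNorm_one_eq_ofReal_integral {n : ℕ} {Ω : Euc n → ℝ}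
    (hint : Integrable (fun x : sphere (0 : Euc n) 1 => Ω x) (sphereMeasure n)) :
    sphereNorm 1 Ω = ENNReal.ofReal (∫ θ, |Ω θ| ∂sphereMeasure n) := by
  rw [sphereNorm, eLpNorm_one_eq_lintegral_enorm, ← ofReal_integral_norm_eq_lintegral_enorm hint]
  rfl

theorem statement1_general (n : ℕ) (Ω : Euc n → ℝ) (hom : HomogZero Ω)
    (hint : Integrable (fun x : Metric.sphere (0 : Euc n) 1 => Ω x) (sphereMeasure n))
    (hmean : MeanZero Ω) :
    ∃ C > 0, ∀ ξ : Euc n, ξ ≠ 0 → ∀ t ∈ Icc (1:ℝ) 2, ∀ j : ℤ,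
      ENNReal.ofReal ‖VectorFourier.fourierIntegral Real.fourierChar volume (innerₗ (Euc n)) (fun x => (Kk n Ω j t x : ℂ)) ξ‖ ≤
        ENNReal.ofReal C * sphereNorm 1 Ω * ENNReal.ofReal (min 1 ‖(2:ℝ) ^ j • ξ‖) := by
  refine ⟨4 * Real.pi, by positivity, fun ξ hξ t ⟨ht1, ht2⟩ j => ?_⟩
  have : Nontrivial (Euc n) := nontrivial_of_ne ξ 0 hξ
  rw [sphereNorm_one_eq_ofReal_integral hint]
  set A := ∫ θ, |Ω θ| ∂sphereMeasure n
  have hA : 0 ≤ A := integral_nonneg fun _ => abs_nonneg _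
  have hK₁ : ∫ x, ‖(Kk n Ω j t x : ℂ)‖ = A * (t / 2) := by
    simpa only [Complex.norm_real] using integral_norm_Kk hom (by positivity)
  have hK₀ : ∫ x, (Kk n Ω j t x : ℂ) = 0 := by
    rw [integral_complex_ofReal, integral_Kk_eq_zero hom hmean, Complex.ofReal_zero]
  have htrivial := hK₁ ▸ VectorFourier.norm_fourierIntegral_le_integral_norm Real.fourierChar volume
    (innerₗ (Euc n)) (fun x => (Kk n Ω j t x : ℂ)) ξ
  have hcancel := hK₁ ▸ norm_fourierIntegral_le_of_integral_eq_zero (integrable_Kk hom hint).ofReal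
    hK₀ (fun x hx => norm_le_of_Kk_ne_zero (by exact_mod_cast hx)) ξ
  rw [← ENNReal.ofReal_mul (by positivity), ← ENNReal.ofReal_mul (by positivity),
    mul_min_of_nonneg _ _ (by positivity), mul_one]
  refine ENNReal.ofReal_le_ofReal (le_min (htrivial.trans ?_) (hcancel.trans ?_))
  · nlinarith [Real.pi_gt_three]
  · rw [norm_smul, Real.norm_of_nonneg (by positivity)]
    calc _ = t ^ 2 * (Real.pi * (A * ‖ξ‖ * 2 ^ j)) := by ring
      _ ≤ 2 ^ 2 * (Real.pi * (A * ‖ξ‖ * 2 ^ j)) := by gcongr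
      _ = _ := by ring

theorem statement1 (n : ℕ) (hn : 2 ≤ n) (Ω : Euc n → ℝ) (hom : HomogZero Ω)
    (hint : Integrable (fun x : Metric.sphere (0 : Euc n) 1 => Ω x) (sphereMeasure n))
    (hmean : MeanZero Ω) :
    ∃ C > 0, ∀ ξ : Euc n, ξ ≠ 0 → ∀ t ∈ Icc (1:ℝ) 2, ∀ j : ℤ,
      ENNReal.ofReal ‖VectorFourier.fourierIntegral Real.fourierChar volume (innerₗ (Euc n)) (fun x => (Kk n Ω j t x : ℂ)) ξ‖ ≤
        ENNReal.ofReal C * sphereNorm 1 Ω * ENNReal.ofReal (min 1 ‖(2:ℝ) ^ j • ξ‖) :=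
  statement1_general n Ω hom hint hmean
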